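/- In the setting of the lower-bound construction (m ≥ 2, p = m − 1, ℓ ≥ 1, x_i^j = e_i + j·e_m, X = { x_i^j : i ∈ [p], j ∈ [ℓ] }, C₁ determined by (ℓ₁,…,ℓ_p) ∈ [ℓ]^p, C₂ = X \ C₁): the Euclidean distance between conv(C₁) and conv(C₂) is at least 1/(ℓ√m). -/

import Mathlib

/-!
The vector `u = (-ℓ₁, …, -ℓ_p, 1)` satisfies `⟪u, x_i^j⟫ = j - ℓ_i`, so the linear functional
`⟪u, ·⟫` is `≤ 0` on `C₁` and `≥ 1` on `C₂`, hence on their convex hulls. By Cauchy–Schwarz any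
`a ∈ conv C₁`, `b ∈ conv C₂` satisfy `1 ≤ ⟪u, b - a⟫ ≤ ‖u‖ * dist a b`, and every coordinate of `u`
is bounded by `ℓ` in absolute value, so `‖u‖ ≤ ℓ √m`.
-/

open scoped RealInnerProductSpace

/-- The point `x_i^j = e_i + j • e_m` of the lower-bound construction. -/
noncomputable def xpt (m i j : ℕ) : EuclideanSpace ℝ (Fin m) :=
  WithLp.toLp 2 (fun c : Fin m => (if (c : ℕ) = i then 1 else 0) + (if (c : ℕ) = m - 1 then (j : ℝ) else 0))

section Separation

variable {E : Type*} [NormedAddCommGroup E] [InnerProductSpace ℝ E]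

theorem inner_le_of_mem_convexHull {s : Set E} {u x : E} {a : ℝ}
    (hs : ∀ y ∈ s, ⟪u, y⟫ ≤ a) (hx : x ∈ convexHull ℝ s) : ⟪u, x⟫ ≤ a :=
  convexHull_min hs (convex_halfSpace_le (innerₛₗ ℝ u).isLinear a) hx

theorem le_inner_of_mem_convexHull {s : Set E} {u x : E} {b : ℝ}
    (hs : ∀ y ∈ s, b ≤ ⟪u, y⟫) (hx : x ∈ convexHull ℝ s) : b ≤ ⟪u, x⟫ :=
  convexHull_min hs (convex_halfSpace_ge (innerₛₗ ℝ u).isLinear b) hx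

theorem sub_le_norm_mul_dist_of_inner_le_of_le_inner {u x y : E} {a b : ℝ}
    (hx : ⟪u, x⟫ ≤ a) (hy : b ≤ ⟪u, y⟫) : b - a ≤ ‖u‖ * dist x y :=
  calc b - a ≤ ⟪u, y - x⟫ := by rw [inner_sub_right]; linarith
    _ ≤ ‖u‖ * ‖y - x‖ := real_inner_le_norm u (y - x)
    _ = ‖u‖ * dist x y := by rw [dist_comm, dist_eq_norm]

end Separation

theorem EuclideanSpace.norm_le_sqrt_card_mul {ι : Type*} [Fintype ι] {x : EuclideanSpace ℝ ι}
    {C : ℝ} (hC : 0 ≤ C) (hx : ∀ i, ‖x i‖ ≤ C) : ‖x‖ ≤ √(Fintype.card ι) * C :=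
  calc ‖x‖ = √(∑ i, ‖x i‖ ^ 2) := EuclideanSpace.norm_eq x
    _ ≤ √(∑ _ : ι, C ^ 2) := by gcongr with i; exact hx i
    _ = √(Fintype.card ι) * C := by
      rw [Finset.sum_const, Finset.card_univ, nsmul_eq_mul, Real.sqrt_mul (Nat.cast_nonneg _),
        Real.sqrt_sq hC]

theorem xpt_eq_single_add_smul_single {m i : ℕ} (j : ℕ) (hi : i < m - 1) :
    xpt m i j = EuclideanSpace.single (⟨i, by omega⟩ : Fin m) 1
      + (j : ℝ) • EuclideanSpace.single (⟨m - 1, by omega⟩ : Fin m) 1 := by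
  ext c
  simp [xpt, Fin.ext_iff]

noncomputable def separatingVector (m : ℕ) (L : ℕ → ℕ) : EuclideanSpace ℝ (Fin m) :=
  WithLp.toLp 2 fun c => if (c : ℕ) = m - 1 then 1 else -(L c : ℝ)

theorem inner_separatingVector_xpt {m i : ℕ} (L : ℕ → ℕ) (j : ℕ) (hi : i < m - 1) :
    ⟪separatingVector m L, xpt m i j⟫ = j - L i := by
  rw [xpt_eq_single_add_smul_single j hi, inner_add_right, real_inner_smul_right,
    EuclideanSpace.inner_single_right, EuclideanSpace.inner_single_right]
  simp [separatingVector, hi.ne]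
  ring

theorem norm_separatingVector_le {m ℓ : ℕ} {L : ℕ → ℕ} (hℓ : 1 ≤ ℓ)
    (hL : ∀ i < m - 1, L i ≤ ℓ) : ‖separatingVector m L‖ ≤ ℓ * √m := by
  have hcoord : ∀ c, ‖separatingVector m L c‖ ≤ ℓ := fun c => by
    by_cases hc : (c : ℕ) = m - 1
    · simp [separatingVector, hc]
      exact_mod_cast hℓ
    · simp [separatingVector, hc]
      exact_mod_cast hL c (by omega)
  simpa [mul_comm] using EuclideanSpace.norm_le_sqrt_card_mul (Nat.cast_nonneg ℓ) hcoord

theorem stmt9_general (m ℓ : ℕ) (hℓ : 1 ≤ ℓ)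
    (L : ℕ → ℕ) (hL : ∀ i < m - 1, 1 ≤ L i ∧ L i ≤ ℓ) :
    ENNReal.ofReal (1 / (ℓ * Real.sqrt m)) ≤
      ⨅ a ∈ convexHull ℝ {z : EuclideanSpace ℝ (Fin m) |
          ∃ i j : ℕ, i < m - 1 ∧ 1 ≤ j ∧ j ≤ L i ∧ z = xpt m i j},
        ⨅ b ∈ convexHull ℝ {z : EuclideanSpace ℝ (Fin m) |
          ∃ i j : ℕ, i < m - 1 ∧ L i < j ∧ j ≤ ℓ ∧ z = xpt m i j},
          ENNReal.ofReal (dist a b) := by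
  set u := separatingVector m L
  refine le_iInf₂ fun a ha => le_iInf₂ fun b hb => ENNReal.ofReal_le_ofReal ?_
  have hua : ⟪u, a⟫ ≤ 0 := by
    refine inner_le_of_mem_convexHull ?_ ha
    rintro _ ⟨i, j, hi, -, hj, rfl⟩
    rw [inner_separatingVector_xpt L j hi, sub_nonpos]
    exact_mod_cast hj
  have hub : 1 ≤ ⟪u, b⟫ := by
    refine le_inner_of_mem_convexHull ?_ hb
    rintro _ ⟨i, j, hi, hj, -, rfl⟩
    rw [inner_separatingVector_xpt L j hi, le_sub_iff_add_le']
    exact_mod_cast hj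
  have hsep : 1 ≤ ‖u‖ * dist a b := by
    simpa using sub_le_norm_mul_dist_of_inner_le_of_le_inner hua hub
  have hu : ‖u‖ ≤ ℓ * √m := norm_separatingVector_le hℓ fun i hi => (hL i hi).2
  have hdist : 1 ≤ ℓ * √m * dist a b := hsep.trans (by gcongr)
  have hpos : 0 < ℓ * √m := pos_of_mul_pos_left (one_pos.trans_le hdist) dist_nonneg
  rwa [div_le_iff₀ hpos, mul_comm]

theorem stmt9 (m ℓ : ℕ) (hm : 2 ≤ m) (hℓ : 1 ≤ ℓ)
    (L : ℕ → ℕ) (hL : ∀ i < m - 1, 1 ≤ L i ∧ L i ≤ ℓ) :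
    ENNReal.ofReal (1 / (ℓ * Real.sqrt m)) ≤
      ⨅ a ∈ convexHull ℝ {z : EuclideanSpace ℝ (Fin m) |
          ∃ i j : ℕ, i < m - 1 ∧ 1 ≤ j ∧ j ≤ L i ∧ z = xpt m i j},
        ⨅ b ∈ convexHull ℝ {z : EuclideanSpace ℝ (Fin m) |
          ∃ i j : ℕ, i < m - 1 ∧ L i < j ∧ j ≤ ℓ ∧ z = xpt m i j},
          ENNReal.ofReal (dist a b) :=
  stmt9_general m ℓ hℓ L hL
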